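/- Let X = R² where, conditional on b ~ Gamma(shape α, mean b₀), R² is noncentral chi-square as in the H-K model with noncentrality A². Suppose α > 1 and A ≥ 0. Then lim_{s→∞} s·M_X(s) = c, where c = (A/2)^{(α-1)/2} · ((α/b₀)^{(α+1)/2}/Γ(α)) · K_{α-1}(√(2Aα/b₀)) for A > 0, and c = α/(2b₀(α-1)) for A = 0. -/

import Mathlib

/-!
Writing `r = s / (2bs + 1)`, the integrand of `s · M(s)` is `b^{α-1} r e^{-Ar - αb/b₀}` with
`0 ≤ r ≤ 1/(2b)` and `r → 1/(2b)`, so it is dominated by `b^{α-2} e^{-αb/b₀} / 2`, which is integrable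
because `α > 1`. Dominated convergence gives the limit `½ ∫₀^∞ b^{α-2} e^{-A/(2b) - αb/b₀} db` (times
the normalising constant). For `A > 0` the substitution `t = A/(2b)` turns this into the integral
defining `K_{α-1}`; for `A = 0` it is a Gamma integral.
-/

open Real MeasureTheory Set Filter

/-- Modified Bessel function of the second kind of order `a`, via the integral
representation `K_a(z) = (1/2)(z/2)^a ∫₀^∞ t^{-a-1} exp(-t - z²/(4t)) dt` (valid for `z > 0`). -/
noncomputable def besselK (a z : ℝ) : ℝ :=
  (1 / 2) * (z / 2) ^ a * ∫ t in Ioi (0 : ℝ), t ^ (-a - 1) * Real.exp (-t - z ^ 2 / (4 * t))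

open Topology

theorem integral_Ioi_comp_div {E : Type*} [NormedAddCommGroup E] [NormedSpace ℝ E]
    (g : ℝ → E) {β : ℝ} (hβ : 0 < β) :
    ∫ x in Ioi 0, (β / x ^ 2) • g (β / x) = ∫ t in Ioi 0, g t := by
  have himage : (fun x => β / x) '' Ioi 0 = Ioi 0 := by
    refine (image_subset_iff.2 fun x hx => div_pos hβ hx).antisymm fun t ht => ?_
    exact ⟨β / t, div_pos hβ ht, div_div_cancel₀ hβ.ne'⟩
  have hderiv : ∀ x ∈ Ioi (0 : ℝ), HasDerivWithinAt (fun x => β / x) (-(β / x ^ 2)) (Ioi 0) x :=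
    fun x hx => by
      simpa [div_eq_mul_inv] using ((hasDerivAt_inv (ne_of_gt hx)).const_mul β).hasDerivWithinAt
  have hinj : InjOn (fun x => β / x) (Ioi 0) := fun x _ y _ h => by
    simpa only [div_div_cancel₀ hβ.ne'] using congrArg (β / ·) h
  conv_rhs => rw [← himage, integral_image_eq_integral_abs_deriv_smul measurableSet_Ioi hderiv hinj]
  refine setIntegral_congr_fun measurableSet_Ioi fun x hx => ?_
  rw [abs_neg, abs_of_pos (div_pos hβ (pow_pos hx 2))]

theorem integral_rpow_mul_exp_neg_div_sub_mul (ν γ : ℝ) {β : ℝ} (hβ : 0 < β) :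
    ∫ x in Ioi 0, x ^ (ν - 1) * exp (-β / x - γ * x) =
      β ^ ν * ∫ t in Ioi 0, t ^ (-ν - 1) * exp (-t - β * γ / t) := by
  rw [← integral_Ioi_comp_div (fun t => t ^ (-ν - 1) * exp (-t - β * γ / t)) hβ,
    ← integral_const_mul]
  refine setIntegral_congr_fun measurableSet_Ioi fun x (hx : 0 < x) => ?_
  have hpow : β ^ ν * (β / x ^ 2) * (β / x) ^ (-ν - 1) = x ^ (ν - 1) := by
    rw [div_rpow hβ.le hx.le, rpow_sub_one hβ.ne', rpow_sub_one hx.ne', rpow_sub_one hx.ne',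
      rpow_neg hβ.le, rpow_neg hx.le]
    field_simp
  rw [smul_eq_mul, ← mul_assoc, ← mul_assoc, hpow]
  congr 2
  field_simp

theorem integral_rpow_mul_exp_neg_div_sub_mul_eq_besselK (ν : ℝ) {β γ : ℝ} (hβ : 0 < β)
    (hγ : 0 < γ) :
    ∫ x in Ioi 0, x ^ (ν - 1) * exp (-β / x - γ * x) =
      2 * (β / γ) ^ (ν / 2) * besselK ν (2 * √(β * γ)) := by
  have hsq : √(β * γ) ^ 2 = β * γ := sq_sqrt (by positivity)
  have hpow : (β / γ) ^ (ν / 2) * √(β * γ) ^ ν = β ^ ν := by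
    rw [sqrt_eq_rpow, ← rpow_mul (by positivity), one_div_mul_eq_div,
      ← mul_rpow (by positivity) (by positivity),
      show β / γ * (β * γ) = β ^ (2 : ℝ) by field_simp; norm_cast, ← rpow_mul hβ.le,
      mul_div_cancel₀ _ two_ne_zero]
  rw [integral_rpow_mul_exp_neg_div_sub_mul ν γ hβ, besselK, mul_div_cancel_left₀ _ two_ne_zero]
  have hexp (t : ℝ) : (2 * √(β * γ)) ^ 2 / (4 * t) = β * γ / t := by
    rw [mul_pow, hsq]
    ring
  simp_rw [hexp, ← hpow]
  ring

theorem tendsto_div_mul_add_one_atTop {c : ℝ} (hc : 0 < c) :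
    Tendsto (fun s => s / (c * s + 1)) atTop (𝓝 c⁻¹) := by
  have hden : Tendsto (fun s => c * s + 1) atTop atTop :=
    tendsto_atTop_add_const_right _ 1 (tendsto_id.const_mul_atTop hc)
  have h := (tendsto_const_nhds (x := c⁻¹)).sub ((tendsto_const_nhds (x := c⁻¹)).div_atTop hden)
  rw [sub_zero] at h
  refine h.congr' ((eventually_ge_atTop 0).mono fun s hs => ?_)
  field_simp
  ring

theorem tendsto_integral_mul_rpow_div_two_mul_add_one {ν A γ : ℝ} (hν : 0 < ν) (hA : 0 ≤ A)
    (hγ : 0 < γ) :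
    Tendsto (fun s => ∫ b in Ioi 0,
        s * (b ^ ν / (2 * b * s + 1) * exp (-A * s / (2 * b * s + 1) - γ * b))) atTop
      (𝓝 (∫ b in Ioi 0, b ^ (ν - 1) * exp (-(A / 2) / b - γ * b) / 2)) := by
  have hform (s b : ℝ) : s * (b ^ ν / (2 * b * s + 1) * exp (-A * s / (2 * b * s + 1) - γ * b)) =
      b ^ ν * (s / (2 * b * s + 1)) * exp (-A * (s / (2 * b * s + 1)) - γ * b) := by
    rw [mul_div_assoc (-A)]
    ring
  simp_rw [hform]
  refine tendsto_integral_filter_of_dominated_convergence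
    (fun b => b ^ (ν - 1) * exp (-γ * b) / 2) (.of_forall fun s => ?_) ?_ ?_ ?_
  · exact (by fun_prop : Measurable _).aestronglyMeasurable
  · filter_upwards [eventually_ge_atTop 0] with s hs
    refine (ae_restrict_iff' measurableSet_Ioi).2 (.of_forall fun b (hb : 0 < b) => ?_)
    have hr₀ : 0 ≤ s / (2 * b * s + 1) := by positivity
    have hr : s / (2 * b * s + 1) ≤ (2 * b)⁻¹ := by
      rw [div_le_iff₀ (by positivity), inv_mul_eq_div, le_div_iff₀ (by positivity)]
      linarith
    rw [norm_of_nonneg (by positivity)]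
    calc b ^ ν * (s / (2 * b * s + 1)) * exp (-A * (s / (2 * b * s + 1)) - γ * b)
        ≤ b ^ ν * (2 * b)⁻¹ * exp (-γ * b) := by
          gcongr
          nlinarith [mul_nonneg hA hr₀]
      _ = b ^ (ν - 1) * exp (-γ * b) / 2 := by
          rw [rpow_sub_one hb.ne']
          field_simp
  · have h := integrableOn_rpow_mul_exp_neg_mul_rpow (by linarith : -1 < ν - 1) one_pos hγ
    simp_rw [rpow_one] at h
    exact h.div_const 2
  · refine (ae_restrict_iff' measurableSet_Ioi).2 (.of_forall fun b (hb : 0 < b) => ?_)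
    have hvalue : b ^ ν * (2 * b)⁻¹ * exp (-A * (2 * b)⁻¹ - γ * b) =
        b ^ (ν - 1) * exp (-(A / 2) / b - γ * b) / 2 := by
      rw [rpow_sub_one hb.ne']
      field_simp
    rw [← hvalue]
    exact ((by fun_prop : Continuous fun r => b ^ ν * r * exp (-A * r - γ * b)).tendsto _).comp
      (tendsto_div_mul_add_one_atTop (by positivity))

theorem gamma_mul_integral_eq_besselK {α A b₀ : ℝ} (hα : 0 < α) (hA : 0 < A) (hb₀ : 0 < b₀) :
    (α / b₀) ^ α / Gamma α *
        ∫ b in Ioi 0, b ^ (α - 1 - 1) * exp (-(A / 2) / b - α / b₀ * b) / 2 =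
      (A / 2) ^ ((α - 1) / 2) * ((α / b₀) ^ ((α + 1) / 2) / Gamma α) *
        besselK (α - 1) (√(2 * A * α / b₀)) := by
  have hγ : 0 < α / b₀ := by positivity
  have hsqrt : 2 * √(A / 2 * (α / b₀)) = √(2 * A * α / b₀) := by
    rw [show 2 * A * α / b₀ = 2 ^ 2 * (A / 2 * (α / b₀)) by ring, sqrt_mul (sq_nonneg 2),
      sqrt_sq zero_le_two]
  have hpow : (α / b₀) ^ α * (A / 2 / (α / b₀)) ^ ((α - 1) / 2) =
      (A / 2) ^ ((α - 1) / 2) * (α / b₀) ^ ((α + 1) / 2) := by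
    rw [div_rpow (by positivity) hγ.le, mul_div_left_comm, ← rpow_sub hγ,
      show α - (α - 1) / 2 = (α + 1) / 2 by ring]
  rw [integral_div, integral_rpow_mul_exp_neg_div_sub_mul_eq_besselK _ (by positivity) hγ, hsqrt]
  linear_combination besselK (α - 1) (√(2 * A * α / b₀)) / Gamma α * hpow

theorem gamma_mul_integral_eq_of_zero {α b₀ : ℝ} (hα : 1 < α) (hb₀ : 0 < b₀) :
    (α / b₀) ^ α / Gamma α *
        ∫ b in Ioi 0, b ^ (α - 1 - 1) * exp (-(0 / 2) / b - α / b₀ * b) / 2 =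
      α / (2 * b₀ * (α - 1)) := by
  have hγ : 0 < α / b₀ := by positivity
  have hGamma : Gamma α = (α - 1) * Gamma (α - 1) := by
    simpa using Gamma_add_one (sub_pos.2 hα).ne'
  simp only [zero_div, neg_zero, zero_sub]
  rw [integral_div, integral_rpow_mul_exp_neg_mul_Ioi (sub_pos.2 hα) hγ, one_div,
    inv_rpow hγ.le, rpow_sub_one hγ.ne', hGamma]
  have hΓ := (Gamma_pos_of_pos (sub_pos.2 hα)).ne'
  field_simp

/-- Asymptotic coefficient of the H-K MGF: with
`M(s) = ((α/b₀)^α/Γ(α)) ∫₀^∞ (b^{α-1}/(2bs+1)) exp(-As/(2bs+1) - αb/b₀) db`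
(noncentrality `A = Ã²`), `α > 1` and `A ≥ 0`, one has `s·M(s) → c` as `s → ∞`, where
`c = (A/2)^{(α-1)/2} ((α/b₀)^{(α+1)/2}/Γ(α)) K_{α-1}(√(2Aα/b₀))` if `A > 0`, and
`c = α/(2b₀(α-1))` if `A = 0`. -/
theorem stmt_7 (α A b₀ : ℝ) (hα : 1 < α) (hA : 0 ≤ A) (hb₀ : 0 < b₀) :
    Tendsto (fun s : ℝ => s *
        (((α / b₀) ^ α / Real.Gamma α) *
          ∫ b in Ioi (0 : ℝ),
            (b ^ (α - 1) / (2 * b * s + 1)) *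
              Real.exp (-A * s / (2 * b * s + 1) - α * b / b₀)))
      atTop
      (nhds (if 0 < A then
          (A / 2) ^ ((α - 1) / 2) * ((α / b₀) ^ ((α + 1) / 2) / Real.Gamma α) *
            besselK (α - 1) (Real.sqrt (2 * A * α / b₀))
        else α / (2 * b₀ * (α - 1)))) := by
  have hlim := (tendsto_integral_mul_rpow_div_two_mul_add_one (sub_pos.2 hα) hA
    (div_pos (zero_lt_one.trans hα) hb₀)).const_mul ((α / b₀) ^ α / Gamma α)
  have hc : (if 0 < A then
      (A / 2) ^ ((α - 1) / 2) * ((α / b₀) ^ ((α + 1) / 2) / Gamma α) *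
        besselK (α - 1) (√(2 * A * α / b₀))
      else α / (2 * b₀ * (α - 1))) =
      (α / b₀) ^ α / Gamma α *
        ∫ b in Ioi 0, b ^ (α - 1 - 1) * exp (-(A / 2) / b - α / b₀ * b) / 2 := by
    split_ifs with hA₀
    · exact (gamma_mul_integral_eq_besselK (zero_lt_one.trans hα) hA₀ hb₀).symm
    · obtain rfl : A = 0 := (not_lt.1 hA₀).antisymm hA
      exact (gamma_mul_integral_eq_of_zero hα hb₀).symm
  rw [hc]
  refine hlim.congr fun s => ?_
  simp_rw [integral_const_mul, mul_div_right_comm α _ b₀]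
  ring
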